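/- arXiv:1506.07235 — 2 statements merged into one kernel-verified Lean document; each statement's English description precedes it below -/
import Mathlib

section
/- Let f : G → H be a function between finite groups, let A be an abelian subgroup of H containing [G,G;f] = ⟨[x,y;f] : x,y ∈ G⟩, and let K ≤ Stab_G(f) = {a ∈ G : f^a = f} with gcd([G:K], |A|) = 1. Let m satisfy m·[G:K] ≡ 1 (mod |A|), and let {aᵢ} be a set of representatives for the left cosets of K in G. Then the distributed average f̿(x) = f(x)·(∏ᵢ [aᵢ, x; f])^m does not depend on the choice of subgroups K and A, the choice of m, or the choice of coset representatives: any two valid choices yield the same function G → H. -/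
/-!
If `fConj f k = f` then `f (k * y) = f k * f y`, so `fDist f a x` depends only on the right coset
`K a` of `a`, for `K = K₁ ⊔ K₂`. Hence the product of the distributors over a transversal of
`Kᵢ ≤ K` is `P ^ [K : Kᵢ]`, where `P` is the product over a transversal of `K`. Both
`[K : K₁] * m₁` and `[K : K₂] * m₂` invert `[G : K]` modulo `|A₁ ⊓ A₂|`, a multiple of the order
of `P`, so the two powers of `P` agree.
-/

/-- The conjugate of an arbitrary function `f : G → H` by `a ∈ G`:
`f^a(x) = f(a)⁻¹ f(ax)`. -/
def fConj {G H : Type*} [Group G] [Group H] (f : G → H) (a : G) : G → H :=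
  fun x => (f a)⁻¹ * f (a * x)

/-- The `f`-distributor of `x` and `y`: `[x, y; f] = f(y)⁻¹ f(x)⁻¹ f(xy)`. -/
def fDist {G H : Type*} [Group G] [Group H] (f : G → H) (x y : G) : H :=
  (f y)⁻¹ * (f x)⁻¹ * f (x * y)

open QuotientGroup

theorem Nat.ModEq.of_mul_right_modEq_one {N n x y : ℕ} (hx : x * n ≡ 1 [MOD N])
    (hy : y * n ≡ 1 [MOD N]) : x ≡ y [MOD N] :=
  calc x = x * 1 := (mul_one x).symm
    _ ≡ x * (y * n) [MOD N] := (hy.mul_left x).symm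
    _ = y * (x * n) := by ring
    _ ≡ y * 1 [MOD N] := hx.mul_left y
    _ = y := mul_one y

theorem pow_eq_pow_of_mul_right_modEq_one {A : Type*} [Group A] (P : A) {n x y : ℕ}
    (hx : x * n ≡ 1 [MOD Nat.card A]) (hy : y * n ≡ 1 [MOD Nat.card A]) : P ^ x = P ^ y :=
  pow_eq_pow_iff_modEq.mpr ((hx.of_mul_right_modEq_one hy).of_dvd (orderOf_dvd_natCard P))

section LeftMulStabilizer

variable {G α : Type*} [Group G]

def leftMulStabilizer (c : G → α) : Subgroup G where
  carrier := {k | ∀ a, c (k * a) = c a}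
  one_mem' a := by rw [one_mul]
  mul_mem' hk hl a := by rw [mul_assoc, hk, hl]
  inv_mem' {k} hk a := by rw [← hk, mul_inv_cancel_left]

theorem apply_inv_out_mk {K : Subgroup G} {c : G → α} (hc : K ≤ leftMulStabilizer c) (g : G) :
    c (g : G ⧸ K).out⁻¹ = c g⁻¹ := by
  obtain ⟨k, hk⟩ := mk_out_eq_mul K g
  rw [hk, mul_inv_rev]
  exact hc (K.inv_mem k.2) g⁻¹

end LeftMulStabilizer

section Transversal

variable {G M : Type*} [Group G] [CommMonoid M] {K K' : Subgroup G} {S : Finset G}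

-- `G ⧸ K` consists of left cosets; inversion turns the right cosets `K s` of `s ∈ S` into `s⁻¹ K`.
theorem bijOn_inv_mk_of_transversal (hS : ∀ g : G, ∃! s, s ∈ S ∧ s * g⁻¹ ∈ K) :
    Set.BijOn (fun s : G => ((s⁻¹ : G) : G ⧸ K)) S Set.univ := by
  refine ⟨fun _ _ => Set.mem_univ _, fun s₁ hs₁ s₂ hs₂ h => ?_, fun q _ => ?_⟩
  · have h₁ : s₁ * s₂⁻¹ ∈ K := by simpa using QuotientGroup.eq.mp h
    exact (hS s₂).unique ⟨hs₁, h₁⟩ ⟨hs₂, by simp⟩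
  · induction q using induction_on with | H g => ?_
    obtain ⟨s, ⟨hs, hsg⟩, -⟩ := hS g⁻¹
    exact ⟨s, hs, QuotientGroup.eq.mpr (by simpa using hsg)⟩

theorem finiteIndex_of_transversal (hS : ∀ g : G, ∃! s, s ∈ S ∧ s * g⁻¹ ∈ K) :
    K.FiniteIndex := by
  have : Finite (G ⧸ K) := Set.finite_univ_iff.mp
    (.of_surjOn _ (bijOn_inv_mk_of_transversal hS).surjOn S.finite_toSet)
  exact Subgroup.finiteIndex_of_finite_quotient

theorem prod_transversal_eq_prod_quotient [Fintype (G ⧸ K)] {c : G → M}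
    (hS : ∀ g : G, ∃! s, s ∈ S ∧ s * g⁻¹ ∈ K) (hc : K ≤ leftMulStabilizer c) :
    ∏ s ∈ S, c s = ∏ q : G ⧸ K, c q.out⁻¹ := by
  have h := bijOn_inv_mk_of_transversal hS
  refine Finset.prod_nbij _ (fun _ _ => Finset.mem_univ _) h.injOn
    (by simpa using h.surjOn) fun s _ => ?_
  rw [apply_inv_out_mk hc, inv_inv]

theorem prod_quotient_eq_pow_relIndex [Fintype (G ⧸ K)] [Fintype (G ⧸ K')] {c : G → M}
    (hKK' : K ≤ K') (hc : K' ≤ leftMulStabilizer c) :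
    ∏ q : G ⧸ K, c q.out⁻¹ = (∏ q : G ⧸ K', c q.out⁻¹) ^ K.relIndex K' := by
  have : K.FiniteIndex := Subgroup.finiteIndex_of_finite_quotient
  let := Fintype.ofFinite (K' ⧸ K.subgroupOf K')
  calc ∏ q : G ⧸ K, c q.out⁻¹
      = ∏ p : (G ⧸ K') × (K' ⧸ K.subgroupOf K'), c p.1.out⁻¹ :=
        Fintype.prod_equiv (Subgroup.quotientEquivProdOfLE hKK') _ _ fun q => by
          induction q using induction_on with | H g => ?_
          exact ((apply_inv_out_mk (hKK'.trans hc) g).trans (apply_inv_out_mk hc g).symm)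
    _ = (∏ q : G ⧸ K', c q.out⁻¹) ^ K.relIndex K' := by
        simp [Fintype.prod_prod_type, Finset.prod_pow, Subgroup.relIndex, Subgroup.index_eq_card,
          Nat.card_eq_fintype_card]

end Transversal

theorem pow_prod_transversal_eq {G A : Type*} [Group G] [CommGroup A] {c : G → A}
    {K₁ K₂ : Subgroup G} {S₁ S₂ : Finset G} {m₁ m₂ : ℕ}
    (hc₁ : K₁ ≤ leftMulStabilizer c) (hc₂ : K₂ ≤ leftMulStabilizer c)
    (hS₁ : ∀ g : G, ∃! s, s ∈ S₁ ∧ s * g⁻¹ ∈ K₁) (hS₂ : ∀ g : G, ∃! s, s ∈ S₂ ∧ s * g⁻¹ ∈ K₂)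
    (hm₁ : m₁ * K₁.index ≡ 1 [MOD Nat.card A]) (hm₂ : m₂ * K₂.index ≡ 1 [MOD Nat.card A]) :
    (∏ s ∈ S₁, c s) ^ m₁ = (∏ s ∈ S₂, c s) ^ m₂ := by
  have := finiteIndex_of_transversal hS₁
  have := finiteIndex_of_transversal hS₂
  have : (K₁ ⊔ K₂).FiniteIndex := Subgroup.finiteIndex_of_le le_sup_left
  let := (K₁ ⊔ K₂).fintypeQuotientOfFiniteIndex
  have hc : K₁ ⊔ K₂ ≤ leftMulStabilizer c := sup_le hc₁ hc₂
  have hprod : ∀ {K : Subgroup G} {S : Finset G} [K.FiniteIndex], K ≤ K₁ ⊔ K₂ →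
      (∀ g : G, ∃! s, s ∈ S ∧ s * g⁻¹ ∈ K) →
      ∏ s ∈ S, c s = (∏ q : G ⧸ (K₁ ⊔ K₂), c q.out⁻¹) ^ K.relIndex (K₁ ⊔ K₂) := by
    intro K S _ hK hS
    let := K.fintypeQuotientOfFiniteIndex
    rw [prod_transversal_eq_prod_quotient hS (hK.trans hc), prod_quotient_eq_pow_relIndex hK hc]
  have hexp : ∀ {K : Subgroup G} {m : ℕ}, K ≤ K₁ ⊔ K₂ → m * K.index ≡ 1 [MOD Nat.card A] →
      K.relIndex (K₁ ⊔ K₂) * m * (K₁ ⊔ K₂).index ≡ 1 [MOD Nat.card A] := by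
    intro K m hK hm
    rwa [mul_right_comm, Subgroup.relIndex_mul_index hK, mul_comm]
  rw [hprod le_sup_left hS₁, hprod le_sup_right hS₂, ← pow_mul, ← pow_mul]
  exact pow_eq_pow_of_mul_right_modEq_one _ (hexp le_sup_left hm₁) (hexp le_sup_right hm₂)

open scoped IsMulCommutative in
theorem Subgroup.list_prod_map_toList_eq_coe_prod {G H : Type*} [Group H] {A : Subgroup H}
    [IsMulCommutative A] (S : Finset G) (c : G → H) (hc : ∀ g, c g ∈ A) :
    (S.toList.map c).prod = ((∏ s ∈ S, ⟨c s, hc s⟩ : A) : H) := by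
  calc (S.toList.map c).prod = A.subtype (S.toList.map fun s => (⟨c s, hc s⟩ : A)).prod := by
        rw [map_list_prod, List.map_map]
        rfl
    _ = _ := by rw [Finset.prod_map_toList]; rfl

theorem fDist_mul_left_of_fConj_eq_self {G H : Type*} [Group G] [Group H] {f : G → H} {k : G}
    (hk : fConj f k = f) (a x : G) : fDist f (k * a) x = fDist f a x := by
  have hmul : ∀ y, f (k * y) = f k * f y := fun y => eq_mul_of_inv_mul_eq (congrFun hk y)
  simp only [fDist, mul_assoc k a x, hmul]
  group

theorem distributed_average_well_defined_general {G H : Type*} [Group G] [Group H]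
    (f : G → H)
    (A₁ A₂ : Subgroup H)
    (hA₁comm : ∀ a ∈ A₁, ∀ b ∈ A₁, a * b = b * a)
    (hA₁dist : ∀ x y : G, fDist f x y ∈ A₁)
    (hA₂dist : ∀ x y : G, fDist f x y ∈ A₂)
    (K₁ K₂ : Subgroup G)
    (hK₁stab : ∀ k ∈ K₁, fConj f k = f)
    (hK₂stab : ∀ k ∈ K₂, fConj f k = f)
    (m₁ m₂ : ℕ)
    (hm₁ : m₁ * K₁.index ≡ 1 [MOD Nat.card A₁])
    (hm₂ : m₂ * K₂.index ≡ 1 [MOD Nat.card A₂])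
    (S₁ S₂ : Finset G)
    (hS₁ : ∀ g : G, ∃! s, s ∈ S₁ ∧ s * g⁻¹ ∈ K₁)
    (hS₂ : ∀ g : G, ∃! s, s ∈ S₂ ∧ s * g⁻¹ ∈ K₂) :
    ∀ x : G,
      f x * ((S₁.toList.map (fun a => fDist f a x)).prod) ^ m₁ =
      f x * ((S₂.toList.map (fun a => fDist f a x)).prod) ^ m₂ := by
  intro x
  have : IsMulCommutative ↥(A₁ ⊓ A₂) :=
    .of_setLike_mul_comm fun a ha b hb => hA₁comm a ha.1 b hb.1
  have hdist : ∀ a, fDist f a x ∈ A₁ ⊓ A₂ := fun a => ⟨hA₁dist a x, hA₂dist a x⟩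
  have hstab : ∀ K : Subgroup G, (∀ k ∈ K, fConj f k = f) →
      K ≤ leftMulStabilizer fun a => (⟨fDist f a x, hdist a⟩ : ↥(A₁ ⊓ A₂)) :=
    fun K hK k hk a => Subtype.ext (fDist_mul_left_of_fConj_eq_self (hK k hk) a x)
  open scoped IsMulCommutative in
  rw [Subgroup.list_prod_map_toList_eq_coe_prod _ _ hdist,
    Subgroup.list_prod_map_toList_eq_coe_prod _ _ hdist, ← SubgroupClass.coe_pow,
    ← SubgroupClass.coe_pow, pow_prod_transversal_eq (hstab K₁ hK₁stab) (hstab K₂ hK₂stab) hS₁ hS₂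
      (hm₁.of_dvd (Subgroup.card_dvd_of_le inf_le_left))
      (hm₂.of_dvd (Subgroup.card_dvd_of_le inf_le_right))]

/-- The distributed average `f̿(x) = f(x) · (∏ᵢ [aᵢ, x; f])^m` does not depend
on the choices made: given abelian subgroups `A₁, A₂ ≤ H` containing all
distributors, subgroups `K₁, K₂ ≤ Stab_G(f)` with `gcd([G:Kⱼ], |Aⱼ|) = 1`,
numbers `mⱼ` with `mⱼ·[G:Kⱼ] ≡ 1 (mod |Aⱼ|)`, and finsets `Sⱼ` of coset
representatives for the cosets of `Kⱼ` in `G` (exactly one representative in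
each coset of `Kⱼ`), both choices yield the same function `G → H`.
(Since all distributors lie in the abelian subgroup `Aⱼ`, the product of the
distributors, here taken in a fixed enumeration, is well defined.) -/
theorem distributed_average_well_defined {G H : Type*} [Group G] [Group H]
    [Finite G] [Finite H] (f : G → H)
    (A₁ A₂ : Subgroup H)
    (hA₁comm : ∀ a ∈ A₁, ∀ b ∈ A₁, a * b = b * a)
    (hA₂comm : ∀ a ∈ A₂, ∀ b ∈ A₂, a * b = b * a)
    (hA₁dist : ∀ x y : G, fDist f x y ∈ A₁)
    (hA₂dist : ∀ x y : G, fDist f x y ∈ A₂)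
    (K₁ K₂ : Subgroup G)
    (hK₁stab : ∀ k ∈ K₁, fConj f k = f)
    (hK₂stab : ∀ k ∈ K₂, fConj f k = f)
    (hcop₁ : Nat.Coprime K₁.index (Nat.card A₁))
    (hcop₂ : Nat.Coprime K₂.index (Nat.card A₂))
    (m₁ m₂ : ℕ)
    (hm₁ : m₁ * K₁.index ≡ 1 [MOD Nat.card A₁])
    (hm₂ : m₂ * K₂.index ≡ 1 [MOD Nat.card A₂])
    (S₁ S₂ : Finset G)
    (hS₁ : ∀ g : G, ∃! s, s ∈ S₁ ∧ s * g⁻¹ ∈ K₁)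
    (hS₂ : ∀ g : G, ∃! s, s ∈ S₂ ∧ s * g⁻¹ ∈ K₂) :
    ∀ x : G,
      f x * ((S₁.toList.map (fun a => fDist f a x)).prod) ^ m₁ =
      f x * ((S₂.toList.map (fun a => fDist f a x)).prod) ^ m₂ :=
  distributed_average_well_defined_general f A₁ A₂ hA₁comm hA₁dist hA₂dist K₁ K₂ hK₁stab hK₂stab m₁
    m₂ hm₁ hm₂ S₁ S₂ hS₁ hS₂
end

section
/- Let f : G → H be a function between finite groups, let A be an abelian subgroup of H containing all distributors [x,y;f] (x, y ∈ G), and let K ≤ Stab_G(f) with gcd([G:K], |A|) = 1. Let m satisfy m·[G:K] ≡ 1 (mod |A|), and let {aᵢ} be a set of representatives for the left cosets of K in G. Then the distributed average f̿ : G → H defined by f̿(x) = f(x)·(∏ᵢ [aᵢ, x; f])^m is a group homomorphism from G to H. -/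
/-- Let `A ≤ H` be an abelian subgroup containing all distributors `[x,y;f]`,
let `K ≤ Stab_G(f)` with `gcd([G:K], |A|) = 1`, let `m·[G:K] ≡ 1 (mod |A|)`,
and let `S` be a set of coset representatives for the cosets of `K` in `G`
(exactly one representative in each coset of `K`). Then the distributed
average `f̿(x) = f(x) · (∏ a ∈ S, [a, x; f])^m` is a homomorphism from `G`
to `H`. (Since all distributors lie in the abelian subgroup `A`, the product
of the distributors, here taken in a fixed enumeration, is well defined.) -/
theorem distributed_average_is_hom {G H : Type*} [Group G] [Group H]
    [Finite G] [Finite H] (f : G → H)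
    (A : Subgroup H)
    (hAcomm : ∀ a ∈ A, ∀ b ∈ A, a * b = b * a)
    (hAdist : ∀ x y : G, fDist f x y ∈ A)
    (K : Subgroup G)
    (hKstab : ∀ k ∈ K, fConj f k = f)
    (hcop : Nat.Coprime K.index (Nat.card A))
    (m : ℕ)
    (hm : m * K.index ≡ 1 [MOD Nat.card A])
    (S : Finset G)
    (hS : ∀ g : G, ∃! s, s ∈ S ∧ s * g⁻¹ ∈ K) :
    ∀ x y : G,
      f (x * y) * ((S.toList.map (fun a => fDist f a (x * y))).prod) ^ m =
        (f x * ((S.toList.map (fun a => fDist f a x)).prod) ^ m) *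
        (f y * ((S.toList.map (fun a => fDist f a y)).prod) ^ m) := by
  classical
  letI : CommGroup A :=
    { (inferInstance : Group A) with
      mul_comm := fun a b => Subtype.ext (hAcomm a a.2 b b.2) }
  -- basic expansion
  have hmul : ∀ x y : G, f (x * y) = f x * f y * fDist f x y := by
    intro x y; simp only [fDist]; group
  have hK : ∀ k ∈ K, ∀ u : G, f (k * u) = f k * f u := by
    intro k hk u
    have h := congrFun (hKstab k hk) u
    simp only [fConj] at h
    rw [← h]; group
  -- rep function
  choose r hrS hrK using fun g => (hS g).exists
  have huniq : ∀ g s, s ∈ S → s * g⁻¹ ∈ K → s = r g := fun g s hs hk =>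
    ((hS g).unique ⟨hs, hk⟩ ⟨hrS g, hrK g⟩)
  have hrid : ∀ s ∈ S, r s = s := by
    intro s hs
    exact (huniq s s hs (by simpa using K.one_mem)).symm
  have hrcoset : ∀ g h : G, g * h⁻¹ ∈ K → r g = r h := by
    intro g h hgh
    refine huniq h (r g) (hrS g) ?_
    have : r g * h⁻¹ = (r g * g⁻¹) * (g * h⁻¹) := by group
    rw [this]
    exact K.mul_mem (hrK g) hgh
  -- distributors in A
  set d : G → G → A := fun x y => ⟨fDist f x y, hAdist x y⟩ with hd
  set D : G → A := fun x => ∏ a ∈ S, d a x with hD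
  -- bridge
  have hbridge : ∀ x : G,
      (S.toList.map (fun a => fDist f a x)).prod = ((D x : A) : H) := by
    intro x
    calc (S.toList.map fun a => fDist f a x).prod
        = ((S.toList.map fun a => d a x).map A.subtype).prod := by
          rw [List.map_map]; rfl
      _ = A.subtype (S.toList.map fun a => d a x).prod := (map_list_prod _ _).symm
      _ = ((D x : A) : H) := by rw [Finset.prod_map_toList]; rfl
  -- K-invariance of distributors
  have hdK : ∀ k ∈ K, ∀ u y : G, fDist f (k * u) y = fDist f u y := by
    intro k hk u y
    have h1 : f (k * u) = f k * f u := hK k hk u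
    have h2 : f (k * u * y) = f k * f (u * y) := by
      rw [mul_assoc]; exact hK k hk (u * y)
    simp only [fDist, h1, h2]; group
  have hdrep : ∀ u y : G, fDist f (r u) y = fDist f u y := by
    intro u y
    have h : r u = (r u * u⁻¹) * u := by group
    rw [h, hdK _ (hrK u) u y]
  -- reindexing
  have hre : ∀ x y : G, (∏ a ∈ S, d (a * x) y) = D y := by
    intro x y
    rw [hD]
    refine Finset.prod_bij' (fun a _ => r (a * x)) (fun a _ => r (a * x⁻¹))
      (fun a ha => hrS _) (fun a ha => hrS _) ?_ ?_ ?_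
    · intro a ha
      have h1 : r (a * x) * x⁻¹ * a⁻¹ = r (a * x) * (a * x)⁻¹ := by group
      have h2 : r (r (a * x) * x⁻¹) = r a := by
        refine hrcoset _ _ ?_
        rw [h1]; exact hrK _
      show r (r (a * x) * x⁻¹) = a
      rw [h2, hrid a ha]
    · intro a ha
      have h1 : r (a * x⁻¹) * x * a⁻¹ = r (a * x⁻¹) * (a * x⁻¹)⁻¹ := by group
      have h2 : r (r (a * x⁻¹) * x) = r a := by
        refine hrcoset _ _ ?_
        rw [h1]; exact hrK _
      show r (r (a * x⁻¹) * x) = a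
      rw [h2, hrid a ha]
    · intro a ha
      exact Subtype.ext (hdrep (a * x) y).symm
  -- conjugation of a list product
  have conj_list : ∀ (c : H) (l : List H),
      c⁻¹ * l.prod * c = (l.map (fun z => c⁻¹ * z * c)).prod := by
    intro c l
    induction l with
    | nil => simp
    | cons h t ih =>
      rw [List.map_cons, List.prod_cons, List.prod_cons, ← ih]; group
  -- pointwise conjugation identity
  have hconj : ∀ a x y : G, (f y)⁻¹ * fDist f a x * f y =
      fDist f x y * fDist f a (x * y) * (fDist f (a * x) y)⁻¹ := by
    intro a x y
    simp only [fDist, mul_assoc]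
    group
  -- aggregated conjugation identity
  have hconjD : ∀ x y : G, (f y)⁻¹ * ((D x : A) : H) * f y =
      (((d x y) ^ S.card * D (x * y) * (D y)⁻¹ : A) : H) := by
    intro x y
    calc (f y)⁻¹ * ((D x : A) : H) * f y
        = (f y)⁻¹ * (S.toList.map (fun a => fDist f a x)).prod * f y := by
          rw [hbridge]
      _ = ((S.toList.map (fun a => fDist f a x)).map
            (fun z => (f y)⁻¹ * z * f y)).prod := conj_list _ _
      _ = (S.toList.map (fun a =>
            (((d x y * d a (x * y) * (d (a * x) y)⁻¹ : A)) : H))).prod := by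
          rw [List.map_map]
          refine congrArg List.prod (List.map_congr_left ?_)
          intro a _
          simp only [Function.comp]
          rw [hconj a x y]
          push_cast
          rfl
      _ = ((S.toList.map (fun a =>
            (d x y * d a (x * y) * (d (a * x) y)⁻¹ : A))).map A.subtype).prod := by
          rw [List.map_map]; rfl
      _ = A.subtype (S.toList.map (fun a =>
            (d x y * d a (x * y) * (d (a * x) y)⁻¹ : A))).prod := (map_list_prod _ _).symm
      _ = ((∏ a ∈ S, (d x y * d a (x * y) * (d (a * x) y)⁻¹) : A) : H) := by
          rw [Finset.prod_map_toList]; rfl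
      _ = (((d x y) ^ S.card * D (x * y) * (D y)⁻¹ : A) : H) := by
          congr 1
          rw [Finset.prod_mul_distrib, Finset.prod_mul_distrib, Finset.prod_const,
            Finset.prod_inv_distrib, hre x y, hD]
  -- cardinality
  have hcard : S.card = K.index := by
    rw [Subgroup.index_eq_card, ← Nat.card_eq_finsetCard]
    refine Nat.card_eq_of_bijective (fun s : ↥S => (((s : G)⁻¹ : G) : G ⧸ K)) ⟨?_, ?_⟩
    · intro s t h
      rw [QuotientGroup.eq] at h
      simp only [inv_inv] at h
      exact Subtype.ext ((hS (t : G)).unique ⟨s.2, h⟩ ⟨t.2, by simpa using K.one_mem⟩)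
    · intro q
      induction q using QuotientGroup.induction_on with
      | H g =>
        refine ⟨⟨r g⁻¹, hrS g⁻¹⟩, ?_⟩
        rw [QuotientGroup.eq]
        have := hrK g⁻¹
        simpa using this
  -- power identity
  have hpow : ∀ c : A, c ^ (S.card * m) = c := by
    intro c
    have h1 : orderOf c ∣ Nat.card A := orderOf_dvd_natCard c
    have h2 : S.card * m ≡ 1 [MOD orderOf c] := by
      refine Nat.ModEq.of_dvd h1 ?_
      rw [hcard, Nat.mul_comm]
      exact hm
    calc c ^ (S.card * m) = c ^ 1 := pow_eq_pow_iff_modEq.mpr h2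
      _ = c := pow_one c
  -- main computation
  intro x y
  rw [hbridge, hbridge, hbridge]
  have key : (f y)⁻¹ * ((D x : A) : H) ^ m * f y =
      ((d x y * D (x * y) ^ m * (D y ^ m)⁻¹ : A) : H) := by
    have h1 : (f y)⁻¹ * ((D x : A) : H) ^ m * f y =
        ((f y)⁻¹ * ((D x : A) : H) * f y) ^ m := by
      have := conj_pow (i := m) (a := (f y)⁻¹) (b := ((D x : A) : H))
      simp only [inv_inv] at this
      exact this.symm
    rw [h1, hconjD]
    have h2 : ((d x y) ^ S.card * D (x * y) * (D y)⁻¹ : A) ^ m =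
        (d x y * D (x * y) ^ m * (D y ^ m)⁻¹ : A) := by
      rw [mul_pow, mul_pow, ← pow_mul, hpow, inv_pow]
    rw [← h2]
    push_cast
    rfl
  have hfxy : f (x * y) = f x * f y * ((d x y : A) : H) := hmul x y
  calc f (x * y) * ((D (x * y) : A) : H) ^ m
      = f x * f y * ((d x y : A) : H) * ((D (x * y) : A) : H) ^ m := by rw [hfxy]
    _ = f x * f y * ((d x y * D (x * y) ^ m * (D y ^ m)⁻¹ : A) : H)
          * ((D y ^ m : A) : H) := by push_cast; group
    _ = f x * f y * ((f y)⁻¹ * ((D x : A) : H) ^ m * f y) * ((D y ^ m : A) : H) := by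
        rw [key]
    _ = (f x * ((D x : A) : H) ^ m) * (f y * ((D y : A) : H) ^ m) := by
        push_cast; group
end
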